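/- arXiv:1310.5616 — 5 statements merged into one kernel-verified Lean document; each statement's English description precedes it below -/
import Mathlib

section
/- Let N = q^k·n^2 be an odd perfect number given in Eulerian form. Then 5/4 < √(8/5) < I(n) < 2, where I(x) = σ(x)/x is the abundancy index. -/
/-!
Multiplicativity of `σ` and perfection give `I(q^k) · I(n²) = 2`. Since `q ≥ 5`, the prime-power
factor satisfies `1 < I(q^k) < q/(q-1) ≤ 5/4`, so `8/5 < I(n²) < 2`. Finally
`I(n) ≤ I(n²) ≤ I(n)²`: the first because `n ∣ n²`, the second because `σ` is submultiplicative.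
-/

/-- The abundancy index `I(x) = σ(x)/x`, as a real number. -/
noncomputable def abundancy (x : ℕ) : ℝ := (ArithmeticFunction.sigma 1 x : ℝ) / x

open Finset ArithmeticFunction
open scoped ArithmeticFunction.sigma

theorem sigma_one_mul_le (m n : ℕ) : σ 1 (m * n) ≤ σ 1 m * σ 1 n := by
  simp only [sigma_one_apply, Nat.divisors_mul, Finset.mul_def, sum_mul_sum, ← sum_product']
  exact sum_image_le_of_nonneg fun _ _ ↦ Nat.zero_le _

theorem abundancy_eq_abundancyIndex (n : ℕ) : abundancy n = n.abundancyIndex := by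
  simp [abundancy, Nat.abundancyIndex, sigma_one_apply]

theorem abundancy_le_of_dvd {m n : ℕ} (hn : n ≠ 0) (hd : m ∣ n) : abundancy m ≤ abundancy n := by
  simp only [abundancy_eq_abundancyIndex]
  exact_mod_cast Nat.abundancyIndex_le_of_dvd hn hd

theorem abundancy_mul_le (m n : ℕ) : abundancy (m * n) ≤ abundancy m * abundancy n := by
  rw [abundancy, abundancy, abundancy, div_mul_div_comm, Nat.cast_mul (m := m)]
  gcongr
  exact_mod_cast sigma_one_mul_le m n

theorem abundancy_mul_of_coprime {m n : ℕ} (h : m.Coprime n) :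
    abundancy (m * n) = abundancy m * abundancy n := by
  rw [abundancy, abundancy, abundancy, isMultiplicative_sigma.map_mul_of_coprime h,
    div_mul_div_comm]
  push_cast; rfl

theorem Nat.Perfect.abundancy_eq_two {N : ℕ} (h : N.Perfect) : abundancy N = 2 := by
  have hN : (N : ℝ) ≠ 0 := by exact_mod_cast h.2.ne'
  rw [abundancy, div_eq_iff hN, sigma_one_apply]
  exact_mod_cast (Nat.perfect_iff_sum_divisors_eq_two_mul h.2).1 h

theorem one_lt_abundancy {m : ℕ} (hm : 1 < m) : 1 < abundancy m := by
  have hσ : m + 1 ≤ σ 1 m := by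
    rw [sigma_one_apply, Nat.sum_divisors_eq_sum_properDivisors_add_self, add_comm]
    gcongr
    exact single_le_sum (f := fun i ↦ i) (fun _ _ ↦ Nat.zero_le _)
      (Nat.one_mem_properDivisors_iff_one_lt.2 hm)
  rw [abundancy, one_lt_div (by positivity)]
  exact_mod_cast hσ

theorem abundancy_prime_pow_lt {p : ℕ} (hp : p.Prime) (k : ℕ) :
    abundancy (p ^ k) < p / (p - 1) := by
  have hp1 : (1 : ℝ) < p := by exact_mod_cast hp.one_lt
  have hσ : (σ 1 (p ^ k) : ℝ) * (p - 1) = p ^ (k + 1) - 1 := by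
    rw [sigma_one_apply_prime_pow hp]
    push_cast
    exact geom_sum_mul _ _
  have hpk : (0 : ℝ) < (p ^ k : ℕ) := by exact_mod_cast pow_pos hp.pos k
  rw [abundancy, div_lt_div_iff₀ hpk (by linarith), hσ]
  push_cast
  rw [pow_succ']
  linarith

theorem abundancy_prime_pow_lt_five_fourths {p : ℕ} (hp : p.Prime) (hp5 : 5 ≤ p) (k : ℕ) :
    abundancy (p ^ k) < 5 / 4 := by
  have hp5' : (5 : ℝ) ≤ p := by exact_mod_cast hp5
  calc abundancy (p ^ k) < p / (p - 1) := abundancy_prime_pow_lt hp k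
    _ ≤ 5 / 4 := by rw [div_le_div_iff₀ (by linarith) (by norm_num)]; linarith

theorem stmt_10_general (q k n : ℕ) (hq : q.Prime) (hq1 : q % 4 = 1) (hk1 : k % 4 = 1)
    (hgcd : Nat.gcd q n = 1)
    (hperf : Nat.Perfect (q ^ k * n ^ 2)) :
    (5 : ℝ) / 4 < Real.sqrt (8 / 5) ∧
    Real.sqrt (8 / 5) < abundancy n ∧ abundancy n < 2 := by
  have hn : n ≠ 0 := by rintro rfl; simpa using hperf.2
  have hA_lt : abundancy (q ^ k) < 5 / 4 :=
    abundancy_prime_pow_lt_five_fourths hq (by have := hq.two_le; omega) k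
  have hA_gt : 1 < abundancy (q ^ k) := one_lt_abundancy (Nat.one_lt_pow (by omega) hq.one_lt)
  have hAB : abundancy (q ^ k) * abundancy (n ^ 2) = 2 := by
    rw [← abundancy_mul_of_coprime (Nat.Coprime.pow k 2 hgcd)]
    exact hperf.abundancy_eq_two
  have hB_lt : abundancy (n ^ 2) < 2 := by nlinarith
  have hB_gt : 8 / 5 < abundancy (n ^ 2) := by nlinarith
  have hI_le : abundancy n ≤ abundancy (n ^ 2) :=
    abundancy_le_of_dvd (pow_ne_zero 2 hn) (dvd_pow_self n two_ne_zero)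
  have hI_sq : abundancy (n ^ 2) ≤ abundancy n ^ 2 := by
    simpa only [sq] using abundancy_mul_le n n
  refine ⟨by rw [Real.lt_sqrt (by norm_num)]; norm_num, ?_, hI_le.trans_lt hB_lt⟩
  calc √(8 / 5) < √(abundancy n ^ 2) := Real.sqrt_lt_sqrt (by norm_num) (hB_gt.trans_le hI_sq)
    _ = abundancy n := Real.sqrt_sq (by unfold abundancy; positivity)

/-- For an odd perfect number `N = q^k * n^2` in Eulerian form,
`5/4 < √(8/5) < I(n) < 2`. -/
theorem stmt_10 (q k n : ℕ) (hq : q.Prime) (hq1 : q % 4 = 1) (hk1 : k % 4 = 1)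
    (hgcd : Nat.gcd q n = 1) (hodd : Odd (q ^ k * n ^ 2))
    (hperf : Nat.Perfect (q ^ k * n ^ 2)) :
    (5 : ℝ) / 4 < Real.sqrt (8 / 5) ∧
    Real.sqrt (8 / 5) < abundancy n ∧ abundancy n < 2 :=
  stmt_10_general q k n hq hq1 hk1 hgcd hperf
end

section
/- Let N = q^k·n^2 be an odd perfect number given in Eulerian form. Then q^k < n^2. -/
open ArithmeticFunction Finset
open scoped ArithmeticFunction.sigma

/-!
Multiplicativity of `σ` turns `σ(q^k n^2) = 2 q^k n^2` into `σ(q^k) σ(n^2) = 2 q^k n^2`, and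
`σ(q^k) ≡ 1 (mod q)` gives `σ(n^2) = m q^k` and `σ(q^k) m = 2 n^2`. For `m ≥ 2` this yields
`n^2 ≥ σ(q^k) > q^k`, and `m = 0` is impossible.

The case `m = 1` is refuted. Write `k = 4j + 1`, `h = 2j + 1` and `A = 1 + q + ⋯ + q^(h-1)`;
then `σ(q^k) = A (q^h + 1)`, so `n^2 = A B` with `q^h + 1 = 2B`, and `A`, `B` are coprime because
`(q - 1) A = q^h - 1`. Hence `σ(A) σ(B) = q^k`, so `σ(A) = q^α`, `σ(B) = q^β`, and the bounds
`q^(h-1) ≤ A ≤ σ(A)`, `q^h < 2B ≤ 2σ(B)` force `β = h`, which is odd. On the other hand, every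
prime `p ∣ B` has `q^h ≡ -1 (mod p)`, while `σ(p^a) ≡ 1 (mod p)`; so if `σ(p^a) = q^e` then
`(-1)^e = 1` and `e` is even. Multiplicativity then makes `β` even.
-/

lemma le_sigma_one_self (m : ℕ) : m ≤ σ 1 m := by
  rw [sigma_one_apply, Nat.sum_divisors_eq_sum_properDivisors_add_self]
  exact Nat.le_add_left m _

lemma lt_sigma_one_self {m : ℕ} (hm : 1 < m) : m < σ 1 m := by
  rw [sigma_one_apply, Nat.sum_divisors_eq_sum_properDivisors_add_self]
  have h1 : 1 ≤ ∑ i ∈ m.properDivisors, i :=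
    single_le_sum (fun i _ => Nat.zero_le i) (Nat.one_mem_properDivisors_iff_one_lt.mpr hm)
  omega

lemma sigma_one_prime_pow_modEq_one {p : ℕ} (hp : p.Prime) (a : ℕ) :
    σ 1 (p ^ a) ≡ 1 [MOD p] := by
  rw [sigma_one_apply_prime_pow hp, sum_range_succ', pow_zero]
  refine Nat.ModEq.symm ((Nat.modEq_iff_dvd' (Nat.le_add_left 1 _)).mpr ?_)
  rw [Nat.add_sub_cancel]
  exact dvd_sum fun i _ => dvd_pow_self p i.succ_ne_zero

lemma Nat.Perfect.sigma_one_mul_sigma_one {a b : ℕ} (h : (a * b).Perfect) (hab : a.Coprime b) :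
    σ 1 a * σ 1 b = 2 * (a * b) := by
  rw [← isMultiplicative_sigma.map_mul_of_coprime hab, sigma_one_apply]
  exact (Nat.perfect_iff_sum_divisors_eq_two_mul h.2).mp h

lemma Nat.Prime.exists_eq_pow_of_mul_eq_pow {q a b k : ℕ} (hq : q.Prime) (h : a * b = q ^ k) :
    ∃ i j, a = q ^ i ∧ b = q ^ j ∧ i + j = k := by
  obtain ⟨i, j, c, d, hij, hcd, rfl, rfl⟩ :=
    mul_eq_mul_prime_pow hq.prime (h.trans (one_mul _).symm)
  rw [eq_comm, mul_eq_one] at hcd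
  exact ⟨i, j, by simp [hcd.1], by simp [hcd.2], hij⟩

lemma geom_sum_mul_pow_add_one {R : Type*} [CommSemiring R] (x : R) (h : ℕ) :
    ∑ i ∈ range (h + h), x ^ i = (∑ i ∈ range h, x ^ i) * (x ^ h + 1) := by
  rw [sum_range_add, mul_add, mul_one, sum_mul]
  simp only [pow_add, mul_comm, add_comm]

lemma coprime_geom_sum_of_dvd_pow_add_one {q h B : ℕ} (hB : Odd B) (hdvd : B ∣ q ^ h + 1) :
    Nat.Coprime (∑ i ∈ range h, q ^ i) B := by
  set A := ∑ i ∈ range h, q ^ i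
  have hgcd_two : Nat.gcd A B ∣ 2 := by
    have hA : (Nat.gcd A B : ℤ) ∣ A := Int.natCast_dvd_natCast.mpr (Nat.gcd_dvd_left A B)
    have hB' : (Nat.gcd A B : ℤ) ∣ (q ^ h + 1 : ℕ) :=
      Int.natCast_dvd_natCast.mpr ((Nat.gcd_dvd_right A B).trans hdvd)
    have htwo : (2 : ℤ) = (q ^ h + 1 : ℕ) - (q - 1) * A := by
      push_cast [A]
      rw [mul_geom_sum]
      ring
    exact_mod_cast htwo ▸ dvd_sub hB' (hA.mul_left _)
  have := Nat.Coprime.coprime_dvd_left hgcd_two (Nat.coprime_two_left.mpr hB)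
  rwa [Nat.Coprime, Nat.gcd_eq_left (Nat.gcd_dvd_right A B)] at this

lemma even_of_sigma_one_prime_pow_eq_pow {p q h a e : ℕ} (hp : p.Prime) (hp2 : p ≠ 2)
    (hdvd : p ∣ q ^ h + 1) (hσ : σ 1 (p ^ a) = q ^ e) : Even e := by
  have : Fact (2 < p) := ⟨lt_of_le_of_ne hp.two_le hp2.symm⟩
  have hqe : (q : ZMod p) ^ e = 1 := by
    exact_mod_cast hσ ▸
      (ZMod.natCast_eq_natCast_iff _ _ _).mpr (sigma_one_prime_pow_modEq_one hp a)
  have hqh : (q : ZMod p) ^ h = -1 :=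
    eq_neg_of_add_eq_zero_left (by exact_mod_cast (ZMod.natCast_eq_zero_iff _ _).mpr hdvd)
  rw [← neg_one_pow_eq_one_iff_even (R := ZMod p) ZMod.neg_one_ne_one, ← hqh, ← pow_mul,
    mul_comm, pow_mul, hqe, one_pow]

lemma even_of_sigma_one_eq_pow_of_dvd {q h s β : ℕ} (hq : q.Prime) (hs : Odd s)
    (hdvd : s ∣ q ^ h + 1) (hσ : σ 1 s = q ^ β) : Even β := by
  induction s using Nat.recOnPosPrimePosCoprime generalizing β with
  | zero => exact absurd hs Nat.not_odd_zero
  | one =>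
    rw [sigma_one_apply, Nat.divisors_one, sum_singleton, eq_comm, Nat.pow_eq_one] at hσ
    rw [hσ.resolve_left hq.one_lt.ne']
    exact Even.zero
  | prime_pow p a hp ha =>
    refine even_of_sigma_one_prime_pow_eq_pow hp ?_ ((dvd_pow_self p ha.ne').trans hdvd) hσ
    rintro rfl
    exact Nat.not_even_iff_odd.mpr hs ((Nat.even_pow' ha.ne').mpr even_two)
  | coprime a b _ _ hab iha ihb =>
    obtain ⟨i, j, ha, hb, rfl⟩ := hq.exists_eq_pow_of_mul_eq_pow
      ((isMultiplicative_sigma.map_mul_of_coprime hab).symm.trans hσ)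
    exact (iha (Nat.odd_mul.mp hs).1 ((dvd_mul_right a b).trans hdvd) ha).add
      (ihb (Nat.odd_mul.mp hs).2 ((dvd_mul_left b a).trans hdvd) hb)

lemma sigma_one_ne_pow_of_sigma_one_pow_eq_two_mul {q k m : ℕ} (hq : q.Prime) (hq_odd : Odd q)
    (hk : k % 4 = 1) (hm : Odd m) (h : σ 1 (q ^ k) = 2 * m) : σ 1 m ≠ q ^ k := by
  intro hσm
  obtain ⟨j, rfl⟩ : ∃ j, k = 4 * j + 1 := ⟨k / 4, by omega⟩
  set A := ∑ i ∈ range (2 * j + 1), q ^ i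
  obtain ⟨B, hB⟩ : Even (q ^ (2 * j + 1) + 1) := hq_odd.pow.add_one
  have hmAB : m = A * B := by
    have hsplit : σ 1 (q ^ (4 * j + 1)) = A * (q ^ (2 * j + 1) + 1) := by
      rw [sigma_one_apply_prime_pow hq, ← geom_sum_mul_pow_add_one,
        show 4 * j + 1 + 1 = 2 * j + 1 + (2 * j + 1) by ring]
    rw [hsplit, hB, ← two_mul, mul_left_comm] at h
    omega
  have hB_odd : Odd B := (Nat.odd_mul.mp (hmAB ▸ hm)).2
  have hAB : A.Coprime B :=
    coprime_geom_sum_of_dvd_pow_add_one hB_odd ⟨2, by rw [hB]; ring⟩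
  obtain ⟨α, β, hα, hβ, hαβ⟩ := hq.exists_eq_pow_of_mul_eq_pow <| by
    rw [← isMultiplicative_sigma.map_mul_of_coprime hAB, ← hmAB, hσm]
  have hα_ge : 2 * j ≤ α := by
    refine (Nat.pow_le_pow_iff_right hq.one_lt).mp ?_
    calc q ^ (2 * j) ≤ A := single_le_sum (fun i _ => Nat.zero_le (q ^ i)) (by simp)
      _ ≤ q ^ α := hα ▸ le_sigma_one_self A
  have hβ_gt : 2 * j + 1 < β + 1 := by
    refine (Nat.pow_lt_pow_iff_right hq.one_lt).mp ?_
    have hq3 : 2 < q := by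
      obtain ⟨c, rfl⟩ := hq_odd
      have := hq.two_le
      omega
    calc q ^ (2 * j + 1) < 2 * B := by omega
      _ ≤ 2 * q ^ β := hβ ▸ Nat.mul_le_mul_left 2 (le_sigma_one_self B)
      _ < q * q ^ β := Nat.mul_lt_mul_of_pos_right hq3 (pow_pos hq.pos β)
      _ = q ^ (β + 1) := (pow_succ' q β).symm
  obtain ⟨t, rfl⟩ := even_of_sigma_one_eq_pow_of_dvd hq hB_odd ⟨2, by rw [hB]; ring⟩ hβ
  omega

theorem stmt_12_general (q k n : ℕ) (hq : q.Prime) (hk1 : k % 4 = 1)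
    (hgcd : Nat.gcd q n = 1) (hodd : Odd (q ^ k * n ^ 2))
    (hperf : Nat.Perfect (q ^ k * n ^ 2)) :
    q ^ k < n ^ 2 := by
  obtain ⟨hqk_odd, hn_odd⟩ := Nat.odd_mul.mp hodd
  have hq_odd : Odd q := (Nat.odd_pow_iff (by omega)).mp hqk_odd
  have hσ := hperf.sigma_one_mul_sigma_one (Nat.Coprime.pow k 2 hgcd)
  have hcop : Nat.Coprime (q ^ k) (σ 1 (q ^ k)) :=
    Nat.Coprime.pow_left k <| Nat.coprime_comm.mp <|
      (sigma_one_prime_pow_modEq_one hq k).gcd_eq.trans (Nat.gcd_one_left q)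
  obtain ⟨m, hm⟩ : q ^ k ∣ σ 1 (n ^ 2) :=
    hcop.dvd_of_dvd_mul_left ⟨2 * n ^ 2, by rw [hσ]; ring⟩
  have hσ_mul : σ 1 (q ^ k) * m = 2 * n ^ 2 := by
    refine Nat.eq_of_mul_eq_mul_left (pow_pos hq.pos k) ?_
    rw [mul_left_comm, ← hm, hσ]; ring
  have hm1 : m ≠ 1 := by
    rintro rfl
    exact sigma_one_ne_pow_of_sigma_one_pow_eq_two_mul hq hq_odd hk1 hn_odd (by simpa using hσ_mul)
      (by simpa using hm)
  have hm0 : m ≠ 0 := by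
    rintro rfl
    exact hn_odd.pos.ne' (by omega)
  have hlt := lt_sigma_one_self (m := q ^ k) (Nat.one_lt_pow (by omega) hq.one_lt)
  nlinarith [Nat.mul_le_mul_left (σ 1 (q ^ k)) (show 2 ≤ m by omega)]

/-- For an odd perfect number `N = q^k * n^2` in Eulerian form, `q^k < n^2`. -/
theorem stmt_12 (q k n : ℕ) (hq : q.Prime) (hq1 : q % 4 = 1) (hk1 : k % 4 = 1)
    (hgcd : Nat.gcd q n = 1) (hodd : Odd (q ^ k * n ^ 2))
    (hperf : Nat.Perfect (q ^ k * n ^ 2)) :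
    q ^ k < n ^ 2 :=
  stmt_12_general q k n hq hk1 hgcd hodd hperf
end

section
/- Let N be an odd perfect number and let r^a be any prime power exactly dividing N (i.e., r is prime, r^a divides N, and r^(a+1) does not divide N, with a ≥ 1). Then r^a·σ(r^a)/N ≤ 2/3. -/
/-!
Write `N = r ^ a * m`. As `r ∤ σ(r ^ a)`, the identity `σ(r ^ a) σ(m) = 2 r ^ a m` forces
`σ(m) = k r ^ a` and `σ(r ^ a) k = 2 m`, so the ratio is `2 / k` and only `k = 1, 2` must be
excluded.

The common tool: if `ℓ ^ e ∥ σ(r ^ a)` and `σ(ℓ ^ e)` is a power of `r`, then that power is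
`≡ 1` modulo `ℓ` but not modulo `ℓ ^ 2`, and lifting the exponent gives
`e ≤ v_ℓ(a + 1) + 1`; as `e` is even, `ℓ ^ e ∣ (a + 1) ^ 2`.
If `k = 1`, this applies to all of `m`, so `r ^ a < 2 m ≤ 2 (a + 1) ^ 2` with `a` odd:
`a ∈ {1, 3}` and then `m = 1`. If `k = 2`, then `M = σ(r ^ a)` is odd with `σ(M) = 2 r ^ a`:
its Euler factor is a prime `q` with `q + 1 = 2 r ^ j` (lifting the exponent once more
excludes higher powers of `q`), the cofactor `u` divides `(a + 1) ^ 2`, and reading `M = q u`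
modulo `r ^ j` gives `r ^ a < 4 u ^ 2 ≤ 4 (a + 1) ^ 4`; the few pairs `(r, a)` left are
checked by computation.
-/

open ArithmeticFunction Finset
open scoped ArithmeticFunction.sigma

namespace OddPerfect

section SigmaPrimePow

variable {p : ℕ}

lemma sigma_one_prime_pow_succ (hp : p.Prime) (k : ℕ) :
    σ 1 (p ^ (k + 1)) = p * σ 1 (p ^ k) + 1 := by
  rw [sigma_one_apply_prime_pow hp, sigma_one_apply_prime_pow hp, sum_range_succ', mul_sum]
  simp only [pow_succ', pow_zero]

lemma sigma_one_prime_pow_mul_sub_one (hp : p.Prime) (k : ℕ) :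
    σ 1 (p ^ k) * (p - 1) + 1 = p ^ (k + 1) := by
  simpa only [Nat.sub_add_cancel hp.one_le, ← sigma_one_apply_prime_pow hp]
    using geom_sum_mul_add (p - 1) (k + 1)

lemma not_dvd_sigma_one_prime_pow (hp : p.Prime) (k : ℕ) : ¬ p ∣ σ 1 (p ^ k) := by
  intro h
  cases k with
  | zero => simp [hp.ne_one] at h
  | succ k =>
    rw [sigma_one_prime_pow_succ hp] at h
    exact hp.not_dvd_one ((Nat.dvd_add_right (dvd_mul_right p _)).mp h)

lemma odd_sigma_one_prime_pow_iff (hp : p.Prime) (hp2 : p ≠ 2) {k : ℕ} :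
    Odd (σ 1 (p ^ k)) ↔ Even k := by
  have hodd : ∀ i ∈ range (k + 1), Odd (p ^ i) := fun i _ => (hp.odd_of_ne_two hp2).pow
  rw [sigma_one_apply_prime_pow hp, odd_sum_iff_odd_card_odd, filter_true_of_mem hodd,
    card_range, Nat.odd_add_one, Nat.not_odd_iff_even]

lemma lt_sigma_one_prime_pow (hp : p.Prime) {k : ℕ} (hk : k ≠ 0) : p ^ k < σ 1 (p ^ k) := by
  have hpos : 0 < ∑ i ∈ range k, p ^ i :=
    sum_pos (fun i _ => pow_pos hp.pos i) (nonempty_range_iff.mpr hk)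
  rw [sigma_one_apply_prime_pow hp, sum_range_succ]
  omega

lemma sigma_one_prime_pow_two_mul_add_one (hp : p.Prime) (w : ℕ) :
    σ 1 (p ^ (2 * w + 1)) = (p + 1) * ∑ i ∈ range (w + 1), (p ^ 2) ^ i := by
  induction w with
  | zero => simpa using sigma_one_prime_pow_succ hp 0
  | succ w ih =>
    rw [show 2 * (w + 1) + 1 = 2 * w + 1 + 1 + 1 by ring, sigma_one_prime_pow_succ hp,
      sigma_one_prime_pow_succ hp, ih, sum_range_succ' _ (w + 1)]
    simp only [pow_succ (p ^ 2), ← sum_mul]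
    ring

end SigmaPrimePow

lemma sigma_one_ordProj_dvd {n p : ℕ} (hp : p.Prime) (hn : n ≠ 0) :
    σ 1 (p ^ n.factorization p) ∣ σ 1 n := by
  conv_rhs => rw [← Nat.ordProj_mul_ordCompl_eq_self n p]
  rw [isMultiplicative_sigma.map_mul_of_coprime ((Nat.coprime_ordCompl hp hn).pow_left _)]
  exact dvd_mul_right _ _

lemma exists_prime_two_dvd_sigma_one_ordProj {n : ℕ} (hn : n ≠ 0) (h : 2 ∣ σ 1 n) :
    ∃ q ∈ n.primeFactors, 2 ∣ σ 1 (q ^ n.factorization q) := by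
  rw [isMultiplicative_sigma.multiplicative_factorization _ hn, Finsupp.prod,
    Nat.support_factorization] at h
  exact (Nat.prime_two.prime.dvd_finsetProd_iff _).mp h

lemma not_dvd_of_dvd_sub_one {ℓ x : ℕ} (hℓ : ℓ ≠ 1) (hx : 1 ≤ x) (h : ℓ ∣ x - 1) :
    ¬ ℓ ∣ x := fun hx' =>
  hℓ (Nat.dvd_one.mp (by simpa [Nat.sub_sub_self hx] using Nat.dvd_sub hx' h))

section Valuations

variable {ℓ : ℕ} [hℓp : Fact ℓ.Prime]

lemma padicValNat_geom_sum (hℓ : Odd ℓ) {x : ℕ} (hx : 1 < x) (hℓx : ℓ ∣ x - 1)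
    (n : ℕ) : padicValNat ℓ (∑ i ∈ range n, x ^ i) = padicValNat ℓ n := by
  obtain rfl | hn := eq_or_ne n 0
  · simp
  have hgeom : (∑ i ∈ range n, x ^ i) * (x - 1) = x ^ n - 1 := by
    have := geom_sum_mul_add (x - 1) n
    rw [Nat.sub_add_cancel hx.le] at this
    omega
  have hxn : 1 < x ^ n := Nat.one_lt_pow hn hx
  have hS : ∑ i ∈ range n, x ^ i ≠ 0 := left_ne_zero_of_mul (by omega : _ * (x - 1) ≠ 0)
  have hlte := padicValNat.pow_sub_pow hℓ hx (by simpa using hℓx)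
    (not_dvd_of_dvd_sub_one hℓp.out.ne_one hx.le hℓx) hn
  rw [one_pow, ← hgeom, padicValNat.mul hS (by omega)] at hlte
  omega

lemma padicValNat_pow_sub_one_le (hℓ : Odd ℓ) {x c : ℕ} (hx : 1 < x)
    (hc : padicValNat ℓ (x ^ c - 1) = 1) (n : ℕ) :
    padicValNat ℓ (x ^ n - 1) ≤ padicValNat ℓ n + 1 := by
  obtain rfl | hn := eq_or_ne n 0
  · simp
  by_cases hdvd : ℓ ∣ x ^ n - 1
  swap
  · rw [padicValNat.eq_zero_of_not_dvd hdvd]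
    omega
  have hc0 : c ≠ 0 := by rintro rfl; simp at hc
  set g := c.gcd n
  have hg0 : g ≠ 0 := (Nat.gcd_pos_of_pos_right c (Nat.pos_of_ne_zero hn)).ne'
  have hxg : 1 < x ^ g := Nat.one_lt_pow hg0 hx
  have hxc : x ^ c - 1 ≠ 0 := by have := Nat.one_lt_pow hc0 hx; omega
  -- pass to the base `x ^ gcd c n`, whose `ℓ`-adic valuation is still `1`, and lift the exponent
  have hgcd : (x ^ c - 1).gcd (x ^ n - 1) = x ^ g - 1 := Nat.pow_sub_one_gcd_pow_sub_one x c n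
  have hℓg : ℓ ∣ x ^ g - 1 :=
    hgcd ▸ Nat.dvd_gcd (dvd_of_one_le_padicValNat hc.ge) hdvd
  have hvg : padicValNat ℓ (x ^ g - 1) = 1 := by
    have hle := (padicValNat_dvd_iff_le hxc).mp
      ((pow_padicValNat_dvd (p := ℓ)).trans (hgcd ▸ Nat.gcd_dvd_left _ _))
    have hge := one_le_padicValNat_of_dvd (by omega) hℓg
    omega
  have hgn : g ∣ n := Nat.gcd_dvd_right c n
  have hlte := padicValNat.pow_sub_pow hℓ hxg (by simpa using hℓg)
    (not_dvd_of_dvd_sub_one hℓp.out.ne_one hxg.le hℓg)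
    ((Nat.div_ne_zero_iff_of_dvd hgn).mpr ⟨hn, hg0⟩)
  rw [← pow_mul, Nat.mul_div_cancel' hgn, one_pow, hvg, padicValNat.div_of_dvd hgn] at hlte
  omega

end Valuations

lemma padicValNat_sigma_one_prime_pow_le {ℓ r e c : ℕ} (hℓ : ℓ.Prime) (hℓ2 : ℓ ≠ 2)
    (hr : r.Prime) (he : e ≠ 0) (h : σ 1 (ℓ ^ e) = r ^ c) (a : ℕ) :
    padicValNat ℓ (σ 1 (r ^ a)) ≤ padicValNat ℓ (a + 1) + 1 := by
  have := Fact.mk hℓ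
  obtain ⟨e, rfl⟩ := Nat.exists_eq_succ_of_ne_zero he
  have hc : padicValNat ℓ (r ^ c - 1) = 1 := by
    rw [← h, sigma_one_prime_pow_succ hℓ, Nat.add_sub_cancel,
      padicValNat.mul hℓ.ne_zero (sigma_pos 1 _ (pow_ne_zero e hℓ.ne_zero)).ne',
      padicValNat_self, padicValNat.eq_zero_of_not_dvd (not_dvd_sigma_one_prime_pow hℓ e)]
  have hgeom := sigma_one_prime_pow_mul_sub_one hr a
  calc padicValNat ℓ (σ 1 (r ^ a))
      ≤ padicValNat ℓ (σ 1 (r ^ a) * (r - 1)) := by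
        rw [padicValNat.mul (sigma_pos 1 _ (pow_ne_zero a hr.ne_zero)).ne'
          (by have := hr.two_le; omega)]
        omega
    _ = padicValNat ℓ (r ^ (a + 1) - 1) := by rw [← hgeom, Nat.add_sub_cancel]
    _ ≤ padicValNat ℓ (a + 1) + 1 :=
        padicValNat_pow_sub_one_le (hℓ.odd_of_ne_two hℓ2) hr.one_lt hc (a + 1)

lemma dvd_add_one_sq_of_sigma_dvd {r a b u w : ℕ} (hr : r.Prime) (hr2 : r ≠ 2) (hu : Odd u)
    (hσu : σ 1 u ∣ r ^ b) (huw : u * w = σ 1 (r ^ a)) (hcop : u.Coprime w) :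
    u ∣ (a + 1) ^ 2 := by
  have hu0 : u ≠ 0 := hu.pos.ne'
  have hw0 : w ≠ 0 := by
    rintro rfl
    exact (sigma_pos 1 _ (pow_ne_zero a hr.ne_zero)).ne' (by simpa using huw.symm)
  rw [← Nat.factorization_prime_le_iff_dvd hu0 (by positivity)]
  intro ℓ hℓ
  have := Fact.mk hℓ
  set e := u.factorization ℓ with he_def
  obtain he | he := Nat.eq_zero_or_pos e
  · simp [he]
  have hℓu : ℓ ∣ u := Nat.dvd_of_factorization_pos he.ne'
  have hℓ2 : ℓ ≠ 2 := by rintro rfl; exact hu.not_two_dvd_nat hℓu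
  obtain ⟨c, -, hc⟩ := (Nat.dvd_prime_pow hr).mp ((sigma_one_ordProj_dvd hℓ hu0).trans hσu)
  obtain ⟨f, hf⟩ : Even e :=
    (odd_sigma_one_prime_pow_iff hℓ hℓ2).mp (hc ▸ (hr.odd_of_ne_two hr2).pow)
  have hℓw : ¬ ℓ ∣ w := (Nat.Prime.coprime_iff_not_dvd hℓ).mp (hcop.coprime_dvd_left hℓu)
  have hv : padicValNat ℓ (σ 1 (r ^ a)) = e := by
    rw [← huw, padicValNat.mul hu0 hw0, padicValNat.eq_zero_of_not_dvd hℓw,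
      he_def, Nat.factorization_def _ hℓ, add_zero]
  have hle := padicValNat_sigma_one_prime_pow_le hℓ hℓ2 hr he.ne' hc a
  -- `e` is even and at most `v_ℓ(a + 1) + 1`, hence at most `2 v_ℓ(a + 1)`
  rw [Nat.factorization_pow, Finsupp.smul_apply, smul_eq_mul, Nat.factorization_def _ hℓ]
  omega

lemma eq_one_of_sigma_one_prime_pow_eq_two_mul_pow {q e r j : ℕ} (hq : q.Prime) (hq2 : q ≠ 2)
    (hr : r.Prime) (hr2 : r ≠ 2) (he : Odd e) (h : σ 1 (q ^ e) = 2 * r ^ j) : e = 1 := by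
  have := Fact.mk hr
  obtain ⟨w, rfl⟩ := he
  rw [sigma_one_prime_pow_two_mul_add_one hq] at h
  set T := ∑ i ∈ range (w + 1), (q ^ 2) ^ i with hT_def
  obtain ⟨x, hx⟩ : 2 ∣ q + 1 := (hq.odd_of_ne_two hq2).add_one.two_dvd
  have hxT : x * T = r ^ j := by rw [hx, mul_assoc] at h; omega
  have hq3 : 3 ≤ q := by have := hq.two_le; omega
  obtain ⟨s, -, hxs⟩ := (Nat.dvd_prime_pow hr).mp (Dvd.intro T hxT)
  have hrx : r ∣ x := by
    rcases s with _ | s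
    · rw [pow_zero] at hxs
      omega
    · exact hxs ▸ dvd_pow_self r s.succ_ne_zero
  have hrq : r ∣ q ^ 2 - 1 := by
    rw [← one_pow 2, Nat.sq_sub_sq, hx]
    exact (hrx.mul_left 2).mul_right _
  obtain ⟨k, -, hTk⟩ := (Nat.dvd_prime_pow hr).mp (Dvd.intro_left x hxT)
  -- `T` is a power of `r` with `v_r(T) = v_r(w + 1)`, so `T ∣ w + 1`
  have hv := padicValNat_geom_sum (hr.odd_of_ne_two hr2) (Nat.one_lt_pow two_ne_zero hq.one_lt)
    hrq (w + 1)
  rw [← hT_def, hTk, padicValNat.prime_pow] at hv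
  have hTw : T ≤ w + 1 :=
    hTk ▸ Nat.le_of_dvd w.succ_pos ((padicValNat_dvd_iff_le w.succ_ne_zero).mpr hv.le)
  have hT : 2 * w + 1 ≤ T := by
    have hterms : ∀ i ∈ range w, 2 ≤ (q ^ 2) ^ (i + 1) := fun i _ =>
      (Nat.one_lt_pow i.succ_ne_zero (Nat.one_lt_pow two_ne_zero hq.one_lt))
    have := card_nsmul_le_sum _ _ _ hterms
    rw [hT_def, sum_range_succ', pow_zero]
    simp only [card_range, smul_eq_mul] at this
    omega
  omega

lemma exists_prime_mul_of_sigma_eq_two_mul_pow {M r a : ℕ} (hr : r.Prime) (hr2 : r ≠ 2)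
    (hM : Odd M) (h : σ 1 M = 2 * r ^ a) :
    ∃ q u j, q.Prime ∧ M = q * u ∧ u.Coprime q ∧ q + 1 = 2 * r ^ j ∧
      r ^ j * σ 1 u = r ^ a := by
  have hM0 : M ≠ 0 := hM.pos.ne'
  obtain ⟨q, hqM, hq2⟩ := exists_prime_two_dvd_sigma_one_ordProj hM0 (h ▸ dvd_mul_right 2 _)
  obtain ⟨hq, hqdvd, -⟩ := Nat.mem_primeFactors.mp hqM
  have hq_ne : q ≠ 2 := by rintro rfl; exact hM.not_two_dvd_nat hqdvd
  set e := M.factorization q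
  set u := ordCompl[q] M
  have he : Odd e := by
    rw [← Nat.not_even_iff_odd, ← odd_sigma_one_prime_pow_iff hq hq_ne, Nat.not_odd_iff_even]
    exact even_iff_two_dvd.mpr hq2
  have hsplit : σ 1 (q ^ e) * σ 1 u = 2 * r ^ a := by
    rw [← h, ← isMultiplicative_sigma.map_mul_of_coprime
      ((Nat.coprime_ordCompl hq hM0).pow_left _), Nat.ordProj_mul_ordCompl_eq_self]
  obtain ⟨t, ht⟩ := hq2
  have htu : t * σ 1 u = r ^ a := by rw [ht, mul_assoc] at hsplit; omega
  obtain ⟨j, -, rfl⟩ := (Nat.dvd_prime_pow hr).mp (Dvd.intro _ htu)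
  have he1 : e = 1 := eq_one_of_sigma_one_prime_pow_eq_two_mul_pow hq hq_ne hr hr2 he ht
  have hMqu : q ^ e * u = M := Nat.ordProj_mul_ordCompl_eq_self M q
  have hσq : σ 1 q = q + 1 := by simpa using sigma_one_prime_pow_succ hq 0
  rw [he1, pow_one] at hMqu ht
  exact ⟨q, u, j, hq, hMqu.symm, (Nat.coprime_ordCompl hq hM0).symm, hσq ▸ ht, htu⟩

lemma pow_lt_two_mul_of_sigma_add_eq {r a j u : ℕ} (hr : r.Prime) (hr2 : r ≠ 2) (hja : j ≤ a)
    (h : σ 1 (r ^ a) + u = 2 * r ^ j * u) : r ^ j < 2 * u := by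
  obtain ⟨t, rfl⟩ := Nat.exists_eq_add_of_le hja
  set S := ∑ i ∈ range j, r ^ i
  -- modulo `r ^ j`, `σ(r ^ (j + t)) ≡ S`, so `h` says `r ^ j ∣ u + S`, while `S < r ^ j / 2`
  have hsplit : σ 1 (r ^ (j + t)) = S + r ^ j * ∑ i ∈ range (t + 1), r ^ i := by
    rw [sigma_one_apply_prime_pow hr, add_assoc, sum_range_add, mul_sum]
    simp only [pow_add, S]
  have hS : S * (r - 1) + 1 = r ^ j := by
    simpa only [Nat.sub_add_cancel hr.one_le] using geom_sum_mul_add (r - 1) j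
  have hu0 : u ≠ 0 := by
    rintro rfl
    rw [add_zero, mul_zero] at h
    exact (sigma_pos 1 _ (pow_ne_zero _ hr.ne_zero)).ne' h
  have hdvd : r ^ j ∣ u + S := by
    refine (Nat.dvd_add_right (dvd_mul_right (r ^ j) (∑ i ∈ range (t + 1), r ^ i))).mp
      ⟨2 * u, ?_⟩
    rw [hsplit] at h
    linarith
  have hle := Nat.le_of_dvd (by omega) hdvd
  have h2S : S * 2 ≤ S * (r - 1) := Nat.mul_le_mul_left S (by have := hr.two_le; omega)
  omega

lemma exists_sigma_eq_mul_of_perfect {x y : ℕ} (h : (x * y).Perfect) (hxy : x.Coprime y)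
    (hx : x.Coprime (σ 1 x)) : ∃ k, σ 1 y = x * k ∧ σ 1 x * k = 2 * y := by
  have hσ : σ 1 x * σ 1 y = 2 * (x * y) := by
    rw [← isMultiplicative_sigma.map_mul_of_coprime hxy, sigma_one_apply]
    exact (Nat.perfect_iff_sum_divisors_eq_two_mul h.2).mp h
  obtain ⟨k, hk⟩ : x ∣ σ 1 y := hx.dvd_of_dvd_mul_left ⟨2 * y, by rw [hσ]; ring⟩
  refine ⟨k, hk, Nat.eq_of_mul_eq_mul_left (Nat.pos_of_mul_pos_right h.2) ?_⟩
  rw [hk] at hσ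
  linarith

lemma four_mul_pow_four_le_three_pow {a : ℕ} (ha : 10 ≤ a) : 4 * (a + 1) ^ 4 ≤ 3 ^ a := by
  induction a, ha using Nat.le_induction with
  | base => norm_num
  | succ n hn ih =>
    have h : (5 * (n + 1 + 1)) ^ 4 ≤ (6 * (n + 1)) ^ 4 := Nat.pow_le_pow_left (by omega) 4
    rw [mul_pow, mul_pow] at h
    calc 4 * (n + 1 + 1) ^ 4 ≤ 3 * (4 * (n + 1) ^ 4) := by norm_num at h; omega
      _ ≤ 3 * 3 ^ n := Nat.mul_le_mul_left 3 ih
      _ = 3 ^ (n + 1) := (pow_succ' 3 n).symm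

lemma lt_ten_of_pow_lt {r a : ℕ} (hr : 3 ≤ r) (h : r ^ a < 4 * (a + 1) ^ 4) : a < 10 := by
  by_contra! ha
  exact (four_mul_pow_four_le_three_pow ha).trans (Nat.pow_le_pow_left hr a) |>.not_gt h

lemma sigma_sigma_prime_pow_ne_of_lt {r a : ℕ} (hr : r.Prime) (hr2 : r ≠ 2) (ha : a ≠ 0)
    (ha2 : Even a) (h : r ^ a < 4 * (a + 1) ^ 4) : σ 1 (σ 1 (r ^ a)) ≠ 2 * r ^ a := by
  have hr3 : 3 ≤ r := by have := hr.two_le; omega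
  have ha10 := lt_ten_of_pow_lt hr3 h
  obtain ⟨b, rfl⟩ := ha2
  have hb : b < 5 := by omega
  have hbound : ∀ n, 4 * (b + b + 1) ^ 4 ≤ n ^ (b + b) → r < n := fun n hn =>
    (Nat.pow_lt_pow_iff_left ha).mp (h.trans_le hn)
  interval_cases b
  · omega
  · have := hbound 18 (by norm_num)
    interval_cases r <;> first | (norm_num at hr; done) | simp [sigma_one_apply, Nat.divisors_ofNat]
  · have := hbound 8 (by norm_num)
    interval_cases r <;> first | (norm_num at hr; done) | simp [sigma_one_apply, Nat.divisors_ofNat]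
  · have := hbound 5 (by norm_num)
    interval_cases r <;> first | (norm_num at hr; done) | simp [sigma_one_apply, Nat.divisors_ofNat]
  · have := hbound 4 (by norm_num)
    interval_cases r
    simp [sigma_one_apply, Nat.divisors_ofNat]

lemma sigma_prime_pow_ne_two_mul {r a m : ℕ} (hr : r.Prime) (hr2 : r ≠ 2) (ha : a ≠ 0)
    (hm : Odd m) (hσm : σ 1 m = r ^ a) : σ 1 (r ^ a) ≠ 2 * m := by
  intro h
  have hdvd : m ∣ (a + 1) ^ 2 :=
    dvd_add_one_sq_of_sigma_dvd hr hr2 hm hσm.dvd (by rw [h, mul_comm]) hm.coprime_two_right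
  have ha_odd : a % 2 = 1 := by
    rw [← Nat.odd_iff, ← Nat.not_even_iff_odd, ← odd_sigma_one_prime_pow_iff hr hr2, h,
      Nat.not_odd_iff_even]
    exact even_two_mul m
  have hlt : r ^ a < 2 * (a + 1) ^ 2 := calc
    r ^ a < σ 1 (r ^ a) := lt_sigma_one_prime_pow hr ha
    _ = 2 * m := h
    _ ≤ 2 * (a + 1) ^ 2 := Nat.mul_le_mul_left 2 (Nat.le_of_dvd (by positivity) hdvd)
  have hr3 : 3 ≤ r := by have := hr.two_le; omega
  have h3 : 3 ^ a ≤ r ^ a := Nat.pow_le_pow_left hr3 a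
  have ha10 : a < 10 :=
    lt_ten_of_pow_lt hr3 (hlt.trans_le (by nlinarith [Nat.one_le_pow 2 (a + 1) a.succ_pos]))
  -- only `a = 1` and `a = 3` survive, and then the odd divisor `m` of `(a + 1) ^ 2` is `1`
  have h2pow : (a + 1) ^ 2 = 2 ^ (a + 1) := by
    interval_cases a <;> omega
  have hm1 : m = 1 := (hm.coprime_two_right.pow_right _).eq_one_of_dvd (h2pow ▸ hdvd)
  rw [hm1, isMultiplicative_sigma.map_one] at hσm
  exact (Nat.one_lt_pow ha hr.one_lt).ne hσm

lemma sigma_sigma_prime_pow_ne_two_mul {r a : ℕ} (hr : r.Prime) (hr2 : r ≠ 2) (ha : a ≠ 0)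
    (hodd : Odd (σ 1 (r ^ a))) : σ 1 (σ 1 (r ^ a)) ≠ 2 * r ^ a := by
  intro h
  obtain ⟨q, u, j, hq, hM, hcop, hqj, hju⟩ :=
    exists_prime_mul_of_sigma_eq_two_mul_pow hr hr2 hodd h
  have hu : Odd u := Nat.Odd.of_mul_right (hM ▸ hodd)
  have hua : u ∣ (a + 1) ^ 2 :=
    dvd_add_one_sq_of_sigma_dvd hr hr2 hu (Dvd.intro_left _ hju) (by rw [hM, mul_comm]) hcop
  have hσu : σ 1 u < 2 * u := by
    refine Nat.lt_of_mul_lt_mul_left (a := q + 1) ?_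
    calc (q + 1) * σ 1 u = 2 * r ^ a := by rw [hqj, mul_assoc, hju]
      _ < 2 * σ 1 (r ^ a) := Nat.mul_lt_mul_of_pos_left (lt_sigma_one_prime_pow hr ha) two_pos
      _ ≤ (q + 1) * (2 * u) := by rw [hM]; nlinarith
  have hja : j ≤ a := (Nat.pow_dvd_pow_iff_le_right hr.one_lt).mp (Dvd.intro _ hju)
  have hrj : r ^ j < 2 * u :=
    pow_lt_two_mul_of_sigma_add_eq hr hr2 hja (by rw [hM, ← hqj]; ring)
  have hbound : r ^ a < 4 * (a + 1) ^ 4 := calc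
    r ^ a = r ^ j * σ 1 u := hju.symm
    _ < (2 * u) * (2 * u) := Nat.mul_lt_mul'' hrj hσu
    _ ≤ (2 * (a + 1) ^ 2) * (2 * (a + 1) ^ 2) := by
      have := Nat.le_of_dvd (by positivity) hua
      gcongr
    _ = 4 * (a + 1) ^ 4 := by ring
  exact sigma_sigma_prime_pow_ne_of_lt hr hr2 ha ((odd_sigma_one_prime_pow_iff hr hr2).mp hodd)
    hbound h

lemma three_le_of_sigma_eq_pow_mul {r a m k : ℕ} (hr : r.Prime) (hr2 : r ≠ 2) (ha : a ≠ 0)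
    (hm : Odd m) (hσm : σ 1 m = r ^ a * k) (hk : σ 1 (r ^ a) * k = 2 * m) : 3 ≤ k := by
  rcases (by omega : k = 0 ∨ k = 1 ∨ k = 2 ∨ 3 ≤ k) with rfl | rfl | rfl | hk3
  · rw [mul_zero] at hσm
    exact absurd hσm (sigma_pos 1 m hm.pos.ne').ne'
  · rw [mul_one] at hσm hk
    exact absurd hk (sigma_prime_pow_ne_two_mul hr hr2 ha hm hσm)
  · have hM : σ 1 (r ^ a) = m := by omega
    exact absurd (by rw [hM, hσm, mul_comm])
      (sigma_sigma_prime_pow_ne_two_mul hr hr2 ha (hM ▸ hm))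
  · exact hk3

end OddPerfect

open OddPerfect in
/-- If `N` is an odd perfect number and `r^a` is a prime power exactly
dividing `N` (with `a ≥ 1`), then `r^a * σ(r^a) / N ≤ 2/3`. -/
theorem stmt_14 (N r a : ℕ) (hodd : Odd N) (hperf : Nat.Perfect N) (hr : r.Prime)
    (ha : 1 ≤ a) (hdvd : r ^ a ∣ N) (hndvd : ¬ r ^ (a + 1) ∣ N) :
    ((r : ℚ) ^ a * (ArithmeticFunction.sigma 1 (r ^ a) : ℚ)) / (N : ℚ) ≤ 2 / 3 := by
  obtain ⟨m, rfl⟩ := hdvd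
  have ha0 : a ≠ 0 := by omega
  have hm : Odd m := Nat.Odd.of_mul_right hodd
  have hr2 : r ≠ 2 := by
    rintro rfl
    exact Nat.not_even_iff_odd.mpr hodd ((Nat.even_pow.mpr ⟨even_two, ha0⟩).mul_right m)
  have hrm : (r ^ a).Coprime m := Nat.Coprime.pow_left _ <| (hr.coprime_iff_not_dvd).mpr
    fun h => hndvd (pow_succ r a ▸ mul_dvd_mul_left _ h)
  obtain ⟨k, hσm, hk⟩ := exists_sigma_eq_mul_of_perfect hperf hrm
    (Nat.Coprime.pow_left _ ((hr.coprime_iff_not_dvd).mpr (not_dvd_sigma_one_prime_pow hr a)))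
  have h3 : σ 1 (r ^ a) * 3 ≤ 2 * m :=
    hk ▸ Nat.mul_le_mul_left _ (three_le_of_sigma_eq_pow_mul hr hr2 ha0 hm hσm hk)
  rw [div_le_div_iff₀ (by exact_mod_cast (Nat.mul_pos (pow_pos hr.pos a) hm.pos)) (by norm_num)]
  exact_mod_cast (show r ^ a * σ 1 (r ^ a) * 3 ≤ 2 * (r ^ a * m) by
    calc r ^ a * σ 1 (r ^ a) * 3 = r ^ a * (σ 1 (r ^ a) * 3) := mul_assoc _ _ _
      _ ≤ r ^ a * (2 * m) := Nat.mul_le_mul_left _ h3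
      _ = 2 * (r ^ a * m) := by ring)
end

section
/- Let N = q^k·n^2 be an odd perfect number given in Eulerian form. If k > 1, then q < n. -/
/-- For an odd perfect number `N = q^k * n^2` in Eulerian form,
if `k > 1` then `q < n`. -/
theorem stmt_17 (q k n : ℕ) (hq : q.Prime) (hq1 : q % 4 = 1) (hk1 : k % 4 = 1)
    (hgcd : Nat.gcd q n = 1) (hodd : Odd (q ^ k * n ^ 2))
    (hperf : Nat.Perfect (q ^ k * n ^ 2)) (hk : 1 < k) :
    q < n := by
  have hq2 : 2 ≤ q := hq.two_le
  have hq5 : 5 ≤ q := by omega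
  have hk5 : 5 ≤ k := by omega
  have hpos : 0 < q ^ k * n ^ 2 := hperf.2
  have hn0 : 0 < n := by
    rcases Nat.eq_zero_or_pos n with h | h
    · simp [h] at hpos
    · exact h
  have hcop : Nat.Coprime (q ^ k) (n ^ 2) := Nat.Coprime.pow_left k (Nat.Coprime.pow_right 2 hgcd)
  have hsum : (∑ d ∈ (q ^ k).divisors, d) * (∑ d ∈ (n ^ 2).divisors, d)
      = 2 * (q ^ k * n ^ 2) := by
    rw [← hcop.sum_divisors_mul]
    exact (Nat.perfect_iff_sum_divisors_eq_two_mul hpos).mp hperf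
  set S := ∑ d ∈ (q ^ k).divisors, d with hS
  have hSgeom : S = ∑ i ∈ Finset.range (k + 1), q ^ i := by
    rw [hS, Nat.sum_divisors_prime_pow hq]
  have hS1 : S = q * (∑ i ∈ Finset.range k, q ^ i) + 1 := by
    rw [hSgeom, Finset.sum_range_succ']
    simp [pow_succ, Finset.mul_sum, mul_comm]
  -- q does not divide S
  have hqS : ¬ q ∣ S := by
    intro hdvd
    have h1 : q ∣ 1 := (Nat.dvd_add_right ⟨_, rfl⟩).mp (hS1 ▸ hdvd)
    have := Nat.le_of_dvd one_pos h1
    omega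
  have hScop : Nat.Coprime S (q ^ k) :=
    Nat.Coprime.pow_right k ((hq.coprime_iff_not_dvd.mpr hqS).symm)
  -- S divides 2 * n ^ 2
  have hSdvd : S ∣ 2 * n ^ 2 := by
    have h1 : S ∣ (2 * n ^ 2) * q ^ k := by
      refine Dvd.intro (∑ d ∈ (n ^ 2).divisors, d) ?_
      rw [hsum]; ring
    exact hScop.dvd_of_dvd_mul_right h1
  have hSle : S ≤ 2 * n ^ 2 := Nat.le_of_dvd (by positivity) hSdvd
  -- q ^ k < S
  have hqkS : q ^ k + 1 ≤ S := by
    rw [hSgeom, Finset.sum_range_succ]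
    have : 1 ≤ ∑ i ∈ Finset.range k, q ^ i := by
      calc 1 = q ^ 0 := (pow_zero q).symm
      _ ≤ ∑ i ∈ Finset.range k, q ^ i :=
        Finset.single_le_sum (f := fun i => q ^ i) (fun i _ => Nat.zero_le _)
          (Finset.mem_range.mpr (by omega))
    omega
  by_contra hcon
  push_neg at hcon
  have h1 : q ^ k < 2 * q ^ 2 := by
    calc q ^ k < S := by omega
    _ ≤ 2 * n ^ 2 := hSle
    _ ≤ 2 * q ^ 2 := by
      have := Nat.pow_le_pow_left hcon 2
      omega
  have h2 : q ^ 5 ≤ q ^ k := Nat.pow_le_pow_right (by omega) hk5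
  have h3 : 2 * q ^ 2 < q ^ 5 := by
    have : q ^ 5 = q ^ 3 * q ^ 2 := by ring
    have h4 : 125 ≤ q ^ 3 := by
      calc (125 : ℕ) = 5 ^ 3 := by norm_num
      _ ≤ q ^ 3 := Nat.pow_le_pow_left hq5 3
    nlinarith [sq_nonneg q]
  omega
end

section
/- Let N = q^k·n^2 be an odd perfect number given in Eulerian form. Then q < n·√3. -/
/-!
Since `σ(q^k)` is prime to `q`, it divides `2n²`; for `k ≥ 5` this already gives
`q² < q^k ≤ σ(q^k) ≤ 2n²`.

For `k = 1`, write `2n² = (q + 1) D`, so that `σ(n²) = q D`; it suffices to show `2q < 3D`.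
As `q ∣ σ(n²)`, the prime `q` divides `σ(p^e) = q u` for some odd prime power `p^e ∥ n²`, and
`u ∣ D`. Split `p^e = X Y` with `X ∣ q + 1` and `Y ∣ D`, so that `u Y ∣ D`. Reducing
`q · u(p - 1) + 1 = p^(e+1)` modulo `X`, where `q ≡ -1`, gives `u(p - 1) ≡ 1 [MOD X]`. Since
`X = p^s ≡ 1 [MOD p - 1]`, the least such multiple of `p - 1` is `(p - 2) X + 1`, and this lower
bound on `u(p - 1)` turns `p^(e+1) = p X Y` into `2q < 3uY ≤ 3D`.
-/

open ArithmeticFunction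
open scoped ArithmeticFunction.sigma

namespace Nat

theorem sigma_one_prime_pow_mul_sub_one_add_one {p : ℕ} (hp : p.Prime) (e : ℕ) :
    σ 1 (p ^ e) * (p - 1) + 1 = p ^ (e + 1) := by
  obtain ⟨a, rfl⟩ : ∃ a, p = a + 1 := ⟨p - 1, (succ_pred_eq_of_pos hp.pos).symm⟩
  rw [sigma_one_apply_prime_pow hp, Nat.add_sub_cancel]
  exact geom_sum_mul_add a (e + 1)

theorem Prime.coprime_sigma_one_pow {p : ℕ} (hp : p.Prime) (e : ℕ) :
    Coprime p (σ 1 (p ^ e)) := by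
  refine hp.coprime_iff_not_dvd.mpr fun h => hp.one_lt.ne' (Nat.dvd_one.mp ?_)
  have hpow : p ∣ σ 1 (p ^ e) * (p - 1) + 1 :=
    sigma_one_prime_pow_mul_sub_one_add_one hp e ▸ dvd_pow_self p e.succ_ne_zero
  exact (Nat.dvd_add_right (h.mul_right _)).mp hpow

theorem le_sigma_one (n : ℕ) : n ≤ σ 1 n := by
  rcases eq_or_ne n 0 with rfl | hn
  · simp
  · rw [sigma_one_apply]
    exact Finset.single_le_sum (f := id) (fun _ _ => zero_le _) (mem_divisors_self n hn)

theorem Perfect.sigma_one_mul_sigma_one_s19 {a b : ℕ} (h : Perfect (a * b)) (hab : Coprime a b) :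
    σ 1 a * σ 1 b = 2 * (a * b) := by
  rw [← isMultiplicative_sigma.map_mul_of_coprime hab, sigma_one_apply]
  exact (perfect_iff_sum_divisors_eq_two_mul h.2).mp h

theorem exists_mem_primeFactors_dvd_sigma_one_ordProj {q m : ℕ} (hq : q.Prime) (hm : m ≠ 0)
    (h : q ∣ σ 1 m) : ∃ p ∈ m.primeFactors,
      q ∣ σ 1 (p ^ m.factorization p) ∧ σ 1 (p ^ m.factorization p) ∣ σ 1 m := by
  rw [isMultiplicative_sigma.multiplicative_factorization _ hm, Finsupp.prod,
    support_factorization] at h ⊢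
  obtain ⟨p, hp, hqp⟩ := (hq.prime.dvd_finsetProd_iff _).mp h
  exact ⟨p, hp, hqp, Finset.dvd_prod_of_mem _ hp⟩

theorem sub_one_mul_add_one_le_of_modEq {a X A : ℕ} (hX : X ≡ 1 [MOD a]) (hA : A ≡ 1 [MOD X])
    (haA : a ∣ A) (hA0 : 0 < A) : (a - 1) * X + 1 ≤ A := by
  obtain ⟨j, hj⟩ := (modEq_iff_dvd' hA0).mp hA.symm
  have hAj : A = X * j + 1 := by omega
  have hj1 : a ∣ j + 1 := by
    have h1 : X * j + 1 ≡ 1 * j + 1 [MOD a] := (hX.mul_right j).add_right 1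
    rw [one_mul, ← hAj] at h1
    exact (modEq_zero_iff_dvd.mp (h1.symm.trans (modEq_zero_iff_dvd.mpr haA)))
  have : a - 1 ≤ j := by have := le_of_dvd (succ_pos j) hj1; omega
  rw [hAj, mul_comm X j]
  gcongr

theorem modEq_one_of_dvd_mul_add_one {X q A : ℕ} (hq : X ∣ q + 1) (hqA : X ∣ q * A + 1) :
    A ≡ 1 [MOD X] := by
  have h1 : (q : ZMod X) + 1 = 0 := by exact_mod_cast (ZMod.natCast_eq_zero_iff _ _).mpr hq
  have h2 : (q : ZMod X) * A + 1 = 0 := by exact_mod_cast (ZMod.natCast_eq_zero_iff _ _).mpr hqA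
  exact (ZMod.natCast_eq_natCast_iff _ _ _).mp <| by
    push_cast; linear_combination (A : ZMod X) * h1 - h2

theorem two_mul_mul_sub_one_le_three_mul_sq {p X A : ℕ} (hp : 3 ≤ p) (hX : 1 ≤ X)
    (hA : (p - 2) * X + 1 ≤ A) : 2 * p * X * (p - 1) ≤ 3 * A ^ 2 := by
  obtain ⟨c, rfl⟩ : ∃ c, p = c + 3 := ⟨p - 3, by omega⟩
  obtain ⟨Z, rfl⟩ : ∃ Z, X = Z + 1 := ⟨X - 1, by omega⟩
  simp only [show c + 3 - 2 = c + 1 by omega, show c + 3 - 1 = c + 2 by omega] at hA ⊢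
  have h : 2 * (c + 3) * (Z + 1) * (c + 2) ≤ 3 * ((c + 1) * (Z + 1) + 1) ^ 2 := by
    ring_nf; nlinarith [Nat.zero_le (c * Z), Nat.zero_le (c * c * Z), Nat.zero_le (Z * Z)]
  exact h.trans (by gcongr)

theorem two_mul_lt_three_mul_of_sigma_one_prime_pow {p e q u X Y : ℕ} (hp : p.Prime)
    (hp3 : 3 ≤ p) (hu : σ 1 (p ^ e) = q * u) (hXY : X * Y = p ^ e) (hX : X ∣ q + 1) :
    2 * q < 3 * (u * Y) := by
  obtain ⟨s, -, rfl⟩ := (dvd_prime_pow hp).mp (Dvd.intro _ hXY)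
  have hgeom : q * (u * (p - 1)) + 1 = p * p ^ s * Y := by
    rw [← mul_assoc, ← hu, sigma_one_prime_pow_mul_sub_one_add_one hp, pow_succ, ← hXY]; ring
  have hA1 : u * (p - 1) ≡ 1 [MOD p ^ s] :=
    modEq_one_of_dvd_mul_add_one hX (hgeom ▸ ⟨p * Y, by ring⟩)
  have hX1 : p ^ s ≡ 1 [MOD p - 1] := by
    simpa using (modEq_sub hp.one_lt.le).pow s
  have hu0 : 0 < u := by
    have := (le_sigma_one (p ^ e)).trans_lt' (pow_pos hp.pos e)
    rw [hu] at this
    exact Nat.pos_of_ne_zero (by rintro rfl; simp at this)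
  have hp1 : 0 < p - 1 := by omega
  have hA := sub_one_mul_add_one_le_of_modEq hX1 hA1 (dvd_mul_left _ _) (Nat.mul_pos hu0 hp1)
  rw [Nat.sub_sub] at hA
  have hsq := two_mul_mul_sub_one_le_three_mul_sq hp3 (Nat.one_le_pow _ _ hp.pos) hA
  refine Nat.lt_of_mul_lt_mul_right (a := u * (p - 1) * (p - 1)) ?_
  calc 2 * q * (u * (p - 1) * (p - 1))
      < 2 * (q * (u * (p - 1)) + 1) * (p - 1) := by nlinarith
    _ = 2 * p * p ^ s * (p - 1) * Y := by rw [hgeom]; ring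
    _ ≤ 3 * (u * (p - 1)) ^ 2 * Y := by gcongr
    _ = 3 * (u * Y) * (u * (p - 1) * (p - 1)) := by ring

theorem sigma_one_prime_pow_dvd_two_mul {q k m : ℕ} (hq : q.Prime)
    (h : σ 1 (q ^ k) * σ 1 m = 2 * (q ^ k * m)) : σ 1 (q ^ k) ∣ 2 * m :=
  ((hq.coprime_sigma_one_pow k).pow_left k).symm.dvd_of_dvd_mul_left ⟨σ 1 m, by rw [h]; ring⟩

theorem sq_lt_three_mul_of_succ_mul_sigma_one {q m : ℕ} (hq : q.Prime) (hm : Odd m)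
    (h : (q + 1) * σ 1 m = 2 * q * m) : q ^ 2 < 3 * m := by
  have hq1 : Coprime q (q + 1) := coprime_self_add_right.mpr (coprime_one_right q)
  obtain ⟨D, hD⟩ : q ∣ σ 1 m := hq1.dvd_of_dvd_mul_left ⟨2 * m, by rw [h]; ring⟩
  have hqD : (q + 1) * D = 2 * m :=
    mul_left_cancel₀ hq.ne_zero (by rw [hD] at h; linear_combination h)
  obtain ⟨p, hp, ⟨u, hu⟩, c, hc⟩ :=
    exists_mem_primeFactors_dvd_sigma_one_ordProj hq hm.pos.ne' (hD ▸ dvd_mul_right q D)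
  have hp' : p.Prime := prime_of_mem_primeFactors hp
  have hp3 : 3 ≤ p := by
    have h2 : p ≠ 2 := by
      rintro rfl
      exact (not_even_iff_odd.mpr hm) (even_iff_two_dvd.mpr (dvd_of_mem_primeFactors hp))
    have := hp'.two_le
    omega
  have huD : u ∣ D := ⟨c, mul_left_cancel₀ hq.ne_zero (by rw [← hD, hc, hu, mul_assoc])⟩
  obtain ⟨X, Y, hX, hY, hXY⟩ := Nat.dvd_mul.mp (hqD ▸ (ordProj_dvd m p).mul_left 2)
  have hpu : Coprime (p ^ m.factorization p) u :=
    ((hp'.coprime_sigma_one_pow _).pow_left _).coprime_dvd_right (Dvd.intro_left _ hu.symm)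
  have hYu : Coprime Y u := hpu.coprime_dvd_left (Dvd.intro_left _ hXY)
  have hD0 : 0 < D := by have := hm.pos; nlinarith
  have h2q : 2 * q < 3 * D :=
    (two_mul_lt_three_mul_of_sigma_one_prime_pow hp' hp3 hu hXY hX).trans_le
      (by gcongr; exact le_of_dvd hD0 (mul_comm Y u ▸ hYu.mul_dvd_of_dvd_of_dvd hY huD))
  nlinarith

end Nat

theorem stmt_19_general (q k n : ℕ) (hq : q.Prime) (hk1 : k % 4 = 1)
    (hgcd : Nat.gcd q n = 1) (hodd : Odd (q ^ k * n ^ 2))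
    (hperf : Nat.Perfect (q ^ k * n ^ 2)) :
    (q : ℝ) < (n : ℝ) * Real.sqrt 3 := by
  have hσ := hperf.sigma_one_mul_sigma_one_s19 (Nat.Coprime.pow k 2 hgcd)
  have hn : Odd (n ^ 2) := (Nat.odd_mul.mp hodd).2
  have hnat : q ^ 2 < 3 * n ^ 2 := by
    obtain rfl | hk5 : k = 1 ∨ 5 ≤ k := by omega
    · refine Nat.sq_lt_three_mul_of_succ_mul_sigma_one hq hn ?_
      have hσq : σ 1 q = q + 1 := by
        simpa [Finset.sum_range_succ, add_comm] using sigma_one_apply_prime_pow (i := 1) hq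
      rw [pow_one, hσq] at hσ
      rw [hσ, mul_assoc]
    · have := hn.pos
      calc q ^ 2 < q ^ k := Nat.pow_lt_pow_right hq.one_lt (by omega)
        _ ≤ σ 1 (q ^ k) := Nat.le_sigma_one _
        _ ≤ 2 * n ^ 2 := Nat.le_of_dvd (by omega) (Nat.sigma_one_prime_pow_dvd_two_mul hq hσ)
        _ < 3 * n ^ 2 := by omega
  have h3 : Real.sqrt 3 ^ 2 = 3 := Real.sq_sqrt (by norm_num)
  refine lt_of_pow_lt_pow_left₀ 2 (by positivity) ?_
  rw [mul_pow, h3]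
  exact_mod_cast (by omega : q ^ 2 < n ^ 2 * 3)

/-- For an odd perfect number `N = q^k * n^2` in Eulerian form, `q < n * √3`. -/
theorem stmt_19 (q k n : ℕ) (hq : q.Prime) (hq1 : q % 4 = 1) (hk1 : k % 4 = 1)
    (hgcd : Nat.gcd q n = 1) (hodd : Odd (q ^ k * n ^ 2))
    (hperf : Nat.Perfect (q ^ k * n ^ 2)) :
    (q : ℝ) < (n : ℝ) * Real.sqrt 3 :=
  stmt_19_general q k n hq hk1 hgcd hodd hperf
end
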